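/- arXiv:1903.07148 — 8 statements merged into one kernel-verified Lean document; each statement's English description precedes it below -/
import Mathlib

section
/- Let n ≥ 1 and let L₁, …, Lₙ be bounded lattices, and let K = L₁ × ⋯ × Lₙ be their direct product with the componentwise lattice structure. Then K splits strongly if and only if at least one of the lattices Lᵢ splits strongly. -/
/-- A bounded lattice `L` *splits strongly* if there are `δ, ε ∈ L` with
`⊥ < ε ≤ δ < ⊤` such that every `α ∈ L` satisfies `α ≤ δ` or `ε ≤ α`. -/
def SplitsStrongly (L : Type*) [Lattice L] [BoundedOrder L] : Prop :=
  ∃ δ ε : L, ⊥ < ε ∧ ε ≤ δ ∧ δ < ⊤ ∧ ∀ α : L, α ≤ δ ∨ ε ≤ α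

/-- The direct product of bounded lattices splits strongly iff one of the factors does. -/
theorem product_splitsStrongly_iff (n : ℕ) (hn : 1 ≤ n) (L : Fin n → Type*)
    [∀ i, Lattice (L i)] [∀ i, BoundedOrder (L i)] :
    SplitsStrongly (∀ i, L i) ↔ ∃ i : Fin n, SplitsStrongly (L i) := by
  classical
  constructor
  · rintro ⟨δ, ε, hε, hεδ, hδ, hsplit⟩
    -- pick j with δ j < ⊤
    have hδne : δ ≠ ⊤ := hδ.ne
    have hj : ∃ j, δ j ≠ ⊤ := by
      by_contra h
      push_neg at h
      exact hδne (funext fun j => h j)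
    obtain ⟨j, hjδ⟩ := hj
    have hδj : δ j < ⊤ := lt_top_iff_ne_top.mpr hjδ
    -- test with update ⊥ j ⊤
    have h1 : ε ≤ Function.update (⊥ : ∀ i, L i) j ⊤ := by
      rcases hsplit (Function.update (⊥ : ∀ i, L i) j ⊤) with h | h
      · exfalso
        have := h j
        simp only [Function.update_self] at this
        exact hjδ (top_le_iff.mp this)
      · exact h
    have hεk : ∀ k, k ≠ j → ε k = ⊥ := by
      intro k hk
      have := h1 k
      rw [Function.update_of_ne hk] at this
      exact le_bot_iff.mp this
    have hεj : ε j ≠ ⊥ := by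
      intro h
      apply hε.ne'
      funext k
      by_cases hk : k = j
      · subst hk; exact h
      · exact hεk k hk
    refine ⟨j, δ j, ε j, lt_of_le_of_ne bot_le (Ne.symm hεj), hεδ j, hδj, ?_⟩
    intro x
    rcases hsplit (Function.update (⊤ : ∀ i, L i) j x) with h | h
    · left
      have := h j
      simpa using this
    · right
      have := h j
      simpa using this
  · rintro ⟨i, δ, ε, hε, hεδ, hδ, hsplit⟩
    refine ⟨Function.update (⊤ : ∀ k, L k) i δ, Function.update (⊥ : ∀ k, L k) i ε,
      ?_, ?_, ?_, ?_⟩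
    · refine lt_of_le_of_ne bot_le fun h => hε.ne' ?_
      have := congrFun h i
      simpa using this.symm
    · intro k
      by_cases hk : k = i
      · subst hk; simpa using hεδ
      · simp [Function.update_of_ne hk]
    · refine lt_of_le_of_ne le_top fun h => hδ.ne ?_
      have := congrFun h i
      simpa using this
    · intro α
      rcases hsplit (α i) with h | h
      · left
        intro k
        by_cases hk : k = i
        · subst hk; simpa using h
        · simp [Function.update_of_ne hk]
      · right
        intro k
        by_cases hk : k = i
        · subst hk; simpa using h
        · simp [Function.update_of_ne hk]
end

section
/- Let A be a finite set and let α, β, γ, δ be uniform equivalence relations on A such that α = β ⊓ γ, δ = β ⊔ γ, and β and γ permute (for all x, y ∈ A: (x, y) ∈ δ if and only if there exists z with (x, z) ∈ γ and (z, y) ∈ β). Then |A/γ| · |A/β| = |A/α| · |A/δ| (equivalently, the index #(δ:γ) = |A/γ|/|A/δ| equals the index #(β:α) = |A/α|/|A/β|). -/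
/-- A setoid on a finite set is *uniform* if all of its equivalence classes
have the same cardinality. -/
def Setoid.IsUniform {A : Type*} (α : Setoid A) : Prop :=
  ∀ x y : A, Nat.card {z : A | α x z} = Nat.card {z : A | α y z}

private lemma aux_card_quot {A : Type*} [Fintype A] (σ : Setoid A) (h : σ.IsUniform) (x : A) :
    Nat.card A = Nat.card (Quotient σ) * Nat.card {z : A | σ x z} := by
  classical
  have : Fintype (Quotient σ) := Fintype.ofFinite _
  have e : A ≃ (q : Quotient σ) × {a : A // Quotient.mk σ a = q} :=
    (Equiv.sigmaFiberEquiv (fun a => Quotient.mk σ a)).symm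
  have h1 : Nat.card A = ∑ q : Quotient σ, Nat.card {a : A // Quotient.mk σ a = q} := by
    rw [Nat.card_congr e]
    simp [Nat.card_eq_fintype_card, Fintype.card_sigma]
  have h2 : ∀ q : Quotient σ, Nat.card {a : A // Quotient.mk σ a = q}
      = Nat.card {z : A | σ x z} := by
    intro q
    have e2 : {a : A // Quotient.mk σ a = q} ≃ {z : A | σ q.out z} := by
      apply Equiv.subtypeEquivRight
      intro a
      rw [Quotient.mk_eq_iff_out]
      exact ⟨fun hh => σ.symm' hh, fun hh => σ.symm' hh⟩
    rw [Nat.card_congr e2, h q.out x]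
  rw [h1]
  simp only [h2]
  rw [Finset.sum_const, Finset.card_univ, smul_eq_mul, Nat.card_eq_fintype_card, Nat.card_eq_fintype_card]

/-- If `α, β, γ, δ` are uniform equivalence relations on a finite set with
`α = β ⊓ γ`, `δ = β ⊔ γ`, and `β` and `γ` permute, then
`|A/γ| ⬝ |A/β| = |A/α| ⬝ |A/δ|`. -/
theorem card_quotient_eq_of_permuting {A : Type*} [Fintype A] (α β γ δ : Setoid A)
    (hα : α.IsUniform) (hβ : β.IsUniform) (hγ : γ.IsUniform) (hδ : δ.IsUniform)
    (hmeet : α = β ⊓ γ) (hjoin : δ = β ⊔ γ)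
    (hperm : ∀ x y : A, δ x y ↔ ∃ z : A, γ x z ∧ β z y) :
    Nat.card (Quotient γ) * Nat.card (Quotient β)
      = Nat.card (Quotient α) * Nat.card (Quotient δ) := by
  classical
  rcases isEmpty_or_nonempty A with hA | ⟨⟨x⟩⟩
  · have : IsEmpty (Quotient γ) := Quotient.instIsEmpty
    have : IsEmpty (Quotient α) := Quotient.instIsEmpty
    simp [Nat.card_of_isEmpty]
  · -- class sizes
    set cα := Nat.card {z : A | α x z} with hcα
    set cβ := Nat.card {z : A | β x z} with hcβ
    set cγ := Nat.card {z : A | γ x z} with hcγ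
    set cδ := Nat.card {z : A | δ x z} with hcδ
    -- double counting
    have key : cγ * cβ = cδ * cα := by
      have e1 : {p : A × A // γ x p.1 ∧ β p.1 p.2}
          ≃ (z : {z : A | γ x z}) × {y : A | β z.1 y} :=
        { toFun := fun p => ⟨⟨p.1.1, p.2.1⟩, ⟨p.1.2, p.2.2⟩⟩
          invFun := fun q => ⟨⟨q.1.1, q.2.1⟩, q.1.2, q.2.2⟩
          left_inv := fun p => rfl
          right_inv := fun q => rfl }
      have e2 : {p : A × A // γ x p.1 ∧ β p.1 p.2}
          ≃ (y : {y : A | δ x y}) × {z : A | γ x z ∧ β z y.1} :=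
        { toFun := fun p => ⟨⟨p.1.2, (hperm x p.1.2).2 ⟨p.1.1, p.2⟩⟩, ⟨p.1.1, p.2⟩⟩
          invFun := fun q => ⟨⟨q.2.1, q.1.1⟩, q.2.2⟩
          left_inv := fun p => rfl
          right_inv := fun q => rfl }
      have c1 : Nat.card {p : A × A // γ x p.1 ∧ β p.1 p.2} = cγ * cβ := by
        rw [Nat.card_congr e1]
        have : Fintype {z : A | γ x z} := Fintype.ofFinite _
        rw [Nat.card_eq_fintype_card, Fintype.card_sigma]
        have : ∀ z : {z : A | γ x z}, Fintype.card {y : A | β z.1 y}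
            = cβ := by
          intro z
          rw [← Nat.card_eq_fintype_card, hβ z.1 x]
        simp only [this, Finset.sum_const, Finset.card_univ, smul_eq_mul,
          ← Nat.card_eq_fintype_card]
        rfl
      have c2 : Nat.card {p : A × A // γ x p.1 ∧ β p.1 p.2} = cδ * cα := by
        rw [Nat.card_congr e2]
        have : Fintype {y : A | δ x y} := Fintype.ofFinite _
        rw [Nat.card_eq_fintype_card, Fintype.card_sigma]
        have hfib : ∀ y : {y : A | δ x y}, Fintype.card {z : A | γ x z ∧ β z y.1}
            = cα := by
          intro ⟨y, hy⟩
          obtain ⟨z₀, hz₀γ, hz₀β⟩ := (hperm x y).1 hy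
          have efib : {z : A | γ x z ∧ β z y} ≃ {z : A | α z₀ z} := by
            apply Equiv.setCongr
            ext z
            constructor
            · rintro ⟨h1, h2⟩
              rw [hmeet]
              exact ⟨β.trans' hz₀β (β.symm' h2),
                γ.trans' (γ.symm' hz₀γ) h1⟩
            · intro hz
              rw [hmeet] at hz
              exact ⟨γ.trans' hz₀γ hz.2, β.trans' (β.symm' hz.1) hz₀β⟩
          rw [← Nat.card_eq_fintype_card, Nat.card_congr efib, hα z₀ x]
        simp only [hfib, Finset.sum_const, Finset.card_univ, smul_eq_mul,
          ← Nat.card_eq_fintype_card]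
        rfl
      rw [← c1, c2]
    -- positivity
    have hpos : 0 < cγ * cβ := by
      have h1 : x ∈ {z : A | γ x z} := γ.refl' x
      have h2 : x ∈ {z : A | β x z} := β.refl' x
      have : Fintype {z : A | γ x z} := Fintype.ofFinite _
      have : Fintype {z : A | β x z} := Fintype.ofFinite _
      have p1 : 0 < cγ := Nat.card_pos_iff.2 ⟨⟨⟨x, h1⟩⟩, inferInstance⟩
      have p2 : 0 < cβ := Nat.card_pos_iff.2 ⟨⟨⟨x, h2⟩⟩, inferInstance⟩
      exact Nat.mul_pos p1 p2
    have hγA := aux_card_quot γ hγ x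
    have hβA := aux_card_quot β hβ x
    have hαA := aux_card_quot α hα x
    have hδA := aux_card_quot δ hδ x
    have main : (Nat.card (Quotient γ) * Nat.card (Quotient β)) * (cγ * cβ)
        = (Nat.card (Quotient α) * Nat.card (Quotient δ)) * (cγ * cβ) := by
      calc (Nat.card (Quotient γ) * Nat.card (Quotient β)) * (cγ * cβ)
          = (Nat.card (Quotient γ) * cγ) * (Nat.card (Quotient β) * cβ) := by ring
        _ = Nat.card A * Nat.card A := by rw [← hγA, ← hβA]
        _ = (Nat.card (Quotient α) * cα) * (Nat.card (Quotient δ) * cδ) := by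
            rw [← hαA, ← hδA]
        _ = (Nat.card (Quotient α) * Nat.card (Quotient δ)) * (cδ * cα) := by ring
        _ = (Nat.card (Quotient α) * Nat.card (Quotient δ)) * (cγ * cβ) := by rw [← key]
    exact Nat.eq_of_mul_eq_mul_right hpos main
end

section
/- Let G be a finite group and let B, C be normal subgroups of G such that B ⊓ C = ⊥, B ⊔ C = ⊤, and the orders of the quotient groups G/B and G/C are coprime. Then every normal subgroup N of G satisfies (N ⊔ B) ⊓ (N ⊔ C) = N. -/
/-- If `B, C` are normal subgroups of a finite group `G` with `B ⊓ C = ⊥`,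
`B ⊔ C = ⊤`, and `|G ⧸ B|` and `|G ⧸ C|` coprime, then every normal subgroup
`N` of `G` satisfies `(N ⊔ B) ⊓ (N ⊔ C) = N`. -/
theorem sup_inf_sup_eq_self {G : Type*} [Group G] [Fintype G]
    (B C : Subgroup G) [B.Normal] [C.Normal]
    (hmeet : B ⊓ C = ⊥) (hjoin : B ⊔ C = ⊤)
    (hcop : (Nat.card (G ⧸ B)).Coprime (Nat.card (G ⧸ C))) :
    ∀ N : Subgroup G, N.Normal → (N ⊔ B) ⊓ (N ⊔ C) = N := by
  intro N hN
  haveI := hN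
  set M := (N ⊔ B) ⊓ (N ⊔ C) with hM
  have hNM : N ≤ M := le_inf le_sup_left le_sup_left
  -- card B = index of C, card C = index of B
  have hcardB : Nat.card B = C.index := by
    have h1 : C.relIndex B = C.index := by
      rw [← Subgroup.relIndex_sup_right, hjoin, Subgroup.relIndex_top_right]
    have h2 : C.subgroupOf B = ⊥ := by
      rw [eq_bot_iff]
      intro x hx
      have : (x : G) ∈ B ⊓ C := ⟨x.2, hx⟩
      rw [hmeet] at this
      simpa [Subgroup.mem_bot] using this
    rw [← h1, Subgroup.relIndex, h2, Subgroup.index_bot]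
  have hcardC : Nat.card C = B.index := by
    have h1 : B.relIndex C = B.index := by
      rw [← Subgroup.relIndex_sup_right, sup_comm, hjoin, Subgroup.relIndex_top_right]
    have h2 : B.subgroupOf C = ⊥ := by
      rw [eq_bot_iff]
      intro x hx
      have : (x : G) ∈ B ⊓ C := ⟨hx, x.2⟩
      rw [hmeet] at this
      simpa [Subgroup.mem_bot] using this
    rw [← h1, Subgroup.relIndex, h2, Subgroup.index_bot]
  -- the relative index of N in M divides card B and card C
  have hdvdB : N.relIndex M ∣ Nat.card B := by
    have h1 : N.relIndex M ∣ N.relIndex (N ⊔ B) :=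
      ⟨_, (Subgroup.relIndex_mul_relIndex N M (N ⊔ B) hNM inf_le_left).symm⟩
    have h2 : N.relIndex (N ⊔ B) = N.relIndex B := Subgroup.relIndex_sup_left _ _
    have h3 : N.relIndex B ∣ Nat.card B := Subgroup.index_dvd_card (N.subgroupOf B)
    exact (h1.trans (h2 ▸ h3))
  have hdvdC : N.relIndex M ∣ Nat.card C := by
    have h1 : N.relIndex M ∣ N.relIndex (N ⊔ C) :=
      ⟨_, (Subgroup.relIndex_mul_relIndex N M (N ⊔ C) hNM inf_le_right).symm⟩
    have h2 : N.relIndex (N ⊔ C) = N.relIndex C := Subgroup.relIndex_sup_left _ _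
    have h3 : N.relIndex C ∣ Nat.card C := Subgroup.index_dvd_card (N.subgroupOf C)
    exact (h1.trans (h2 ▸ h3))
  have hcop' : (Nat.card B).Coprime (Nat.card C) := by
    rw [hcardB, hcardC]
    exact (hcop.symm : (C.index).Coprime (B.index))
  have h1 : N.relIndex M = 1 := Nat.eq_one_of_dvd_coprimes hcop' hdvdB hdvdC
  exact le_antisymm (Subgroup.relIndex_eq_one.mp h1) hNM
end

section
/- Let p be a prime and let H and K be nontrivial finite p-groups. Then the direct product H × K has a skew subgroup, i.e., there exists a subgroup I of H × K with I ≠ (I ⊓ (H × {1})) ⊔ (I ⊓ ({1} × K)). -/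
private lemma prod_zpow_mk {M N : Type*} [Group M] [Group N] (a : M) (b : N) (n : ℤ) :
    (a, b) ^ n = (a ^ n, b ^ n) := rfl

/-- If `H` and `K` are nontrivial finite `p`-groups, then `H × K` has a skew
subgroup: a subgroup `I` with `I ≠ (I ⊓ (H × 1)) ⊔ (I ⊓ (1 × K))`. -/
theorem exists_skew_subgroup (p : ℕ) (hp : p.Prime) {H K : Type*} [Group H] [Group K]
    [Finite H] [Finite K] [Nontrivial H] [Nontrivial K]
    (hH : IsPGroup p H) (hK : IsPGroup p K) :
    ∃ I : Subgroup (H × K),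
      I ≠ (I ⊓ (⊤ : Subgroup H).prod (⊥ : Subgroup K))
            ⊔ (I ⊓ (⊥ : Subgroup H).prod (⊤ : Subgroup K)) := by
  have : Fact p.Prime := ⟨hp⟩
  have hdH : p ∣ Nat.card H := by
    rcases hH.card_eq_or_dvd with h | h
    · exact absurd (Nat.card_eq_one_iff_unique.mp h).1 (not_subsingleton H)
    · exact h
  have hdK : p ∣ Nat.card K := by
    rcases hK.card_eq_or_dvd with h | h
    · exact absurd (Nat.card_eq_one_iff_unique.mp h).1 (not_subsingleton K)
    · exact h
  obtain ⟨h, hh⟩ := exists_prime_orderOf_dvd_card' p hdH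
  obtain ⟨k, hk⟩ := exists_prime_orderOf_dvd_card' p hdK
  refine ⟨Subgroup.zpowers (h, k), ?_⟩
  have hRHS : (Subgroup.zpowers (h, k) ⊓ (⊤ : Subgroup H).prod (⊥ : Subgroup K))
      ⊔ (Subgroup.zpowers (h, k) ⊓ (⊥ : Subgroup H).prod (⊤ : Subgroup K)) = ⊥ := by
    rw [← le_bot_iff]
    apply sup_le
    · rintro g ⟨hg1, hg2⟩
      obtain ⟨n, rfl⟩ := hg1
      simp only [prod_zpow_mk] at hg2 ⊢
      replace hg2 : (h ^ n, k ^ n) ∈ (⊤ : Subgroup H).prod (⊥ : Subgroup K) := hg2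
      rw [Subgroup.mem_prod] at hg2
      have hy : k ^ n = 1 := Subgroup.mem_bot.mp hg2.2
      have hdvd : (orderOf k : ℤ) ∣ n := orderOf_dvd_iff_zpow_eq_one.mpr hy
      rw [hk] at hdvd
      obtain ⟨m, rfl⟩ := hdvd
      have hx : h ^ ((p : ℤ) * m) = 1 := by
        rw [zpow_mul, ← hh, zpow_natCast, pow_orderOf_eq_one, one_zpow]
      simp only [Subgroup.mem_bot, Prod.ext_iff]
      exact ⟨hx, hy⟩
    · rintro g ⟨hg1, hg2⟩
      obtain ⟨n, rfl⟩ := hg1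
      simp only [prod_zpow_mk] at hg2 ⊢
      replace hg2 : (h ^ n, k ^ n) ∈ (⊥ : Subgroup H).prod (⊤ : Subgroup K) := hg2
      rw [Subgroup.mem_prod] at hg2
      have hx : h ^ n = 1 := Subgroup.mem_bot.mp hg2.1
      have hdvd : (orderOf h : ℤ) ∣ n := orderOf_dvd_iff_zpow_eq_one.mpr hx
      rw [hh] at hdvd
      obtain ⟨m, rfl⟩ := hdvd
      have hy : k ^ ((p : ℤ) * m) = 1 := by
        rw [zpow_mul, ← hk, zpow_natCast, pow_orderOf_eq_one, one_zpow]
      simp only [Subgroup.mem_bot, Prod.ext_iff]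
      exact ⟨hx, hy⟩
  rw [hRHS]
  intro hbot
  have hmem : (h, k) = (1 : H × K) := by
    have := Subgroup.mem_zpowers (h, k)
    rwa [hbot, Subgroup.mem_bot] at this
  have hh1 : h = 1 := congrArg Prod.fst hmem
  rw [hh1, orderOf_one] at hh
  exact hp.one_lt.ne' hh.symm
end

section
/- Let p be a prime, let r ≥ 1, and let m₁ ≥ m₂ ≥ ⋯ ≥ m_r ≥ 1 be integers. Let G = ∏_{i=1}^r ℤ/p^{m_i}. Then the lattice of subgroups of G splits strongly if and only if neither (r ≥ 2 and m₁ = m₂) nor (r = 1 and m₁ = 1); equivalently, if and only if (r = 1 and m₁ ≥ 2) or (r ≥ 2 and m₁ > m₂). -/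
section Aux

/-- An element of `ZMod (p^n)` whose value is not divisible by `p` is invertible. -/
lemma zmod_exists_inv {p : ℕ} (hp : p.Prime) {n : ℕ} (u : ZMod (p ^ n))
    (h : ¬ p ∣ u.val) : ∃ c : ZMod (p ^ n), c * u = 1 := by
  haveI : NeZero (p ^ n) := ⟨pow_ne_zero _ hp.pos.ne'⟩
  have hcop : Nat.Coprime u.val (p ^ n) :=
    Nat.Coprime.pow_right _ ((Nat.Prime.coprime_iff_not_dvd hp).mpr h).symm
  have hu : IsUnit u := by
    have h1 := (ZMod.isUnit_iff_coprime u.val (p ^ n)).mpr hcop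
    rwa [ZMod.natCast_val, ZMod.cast_id] at h1
  exact isUnit_iff_exists_inv'.mp hu

lemma zmod_cast_zero_iff {p : ℕ} (hp : p.Prime) {n : ℕ} (hn : n ≠ 0) (u : ZMod (p ^ n)) :
    ZMod.castHom (dvd_pow_self p hn) (ZMod p) u = 0 ↔ p ∣ u.val := by
  haveI : NeZero (p ^ n) := ⟨pow_ne_zero _ hp.pos.ne'⟩
  rw [ZMod.castHom_apply, ← ZMod.natCast_val, ZMod.natCast_eq_zero_iff]

/-- Positive direction: if `m j0 ≥ 2` (where `j0 = 0`) and all other exponents are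
strictly smaller, then the subgroup lattice splits strongly. -/
lemma splits_positive (p : ℕ) (hp : p.Prime) (r : ℕ) (hr : 1 ≤ r) (m : Fin r → ℕ)
    (hm2 : 2 ≤ m ⟨0, hr⟩) (hlt : ∀ i : Fin r, i ≠ ⟨0, hr⟩ → m i < m ⟨0, hr⟩) :
    SplitsStrongly (AddSubgroup (∀ i : Fin r, ZMod (p ^ m i))) := by
  haveI : ∀ i : Fin r, NeZero (p ^ m i) := fun i => ⟨pow_ne_zero _ hp.pos.ne'⟩
  set j0 : Fin r := ⟨0, hr⟩ with hj0def
  have hmj0 : m j0 ≠ 0 := by omega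
  set φ : (∀ i : Fin r, ZMod (p ^ m i)) →+ ZMod p :=
    ((ZMod.castHom (dvd_pow_self p hmj0) (ZMod p)).toAddMonoidHom).comp
      (Pi.evalAddMonoidHom (fun i => ZMod (p ^ m i)) j0) with hφdef
  have hφ : ∀ x, φ x = ZMod.castHom (dvd_pow_self p hmj0) (ZMod p) (x j0) := fun _ => rfl
  set z0 : (∀ i : Fin r, ZMod (p ^ m i)) :=
    Pi.single j0 ((p ^ (m j0 - 1) : ℕ) : ZMod (p ^ m j0)) with hz0def
  refine ⟨φ.ker, AddSubgroup.zmultiples z0, ?_, ?_, ?_, ?_⟩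
  · rw [bot_lt_iff_ne_bot]
    intro h
    have hz : z0 ∈ AddSubgroup.zmultiples z0 := AddSubgroup.mem_zmultiples z0
    rw [h, AddSubgroup.mem_bot] at hz
    have h1 := congrFun hz j0
    rw [hz0def, Pi.single_eq_same, Pi.zero_apply,
      ZMod.natCast_eq_zero_iff] at h1
    have := (Nat.pow_dvd_pow_iff_le_right hp.one_lt).mp h1
    omega
  · rw [AddSubgroup.zmultiples_le, AddMonoidHom.mem_ker, hφ, hz0def, Pi.single_eq_same,
      map_natCast, ZMod.natCast_eq_zero_iff]
    exact dvd_pow_self p (by omega)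
  · rw [lt_top_iff_ne_top]
    intro h
    have h1 : Pi.single j0 (1 : ZMod (p ^ m j0)) ∈ φ.ker := h ▸ AddSubgroup.mem_top _
    rw [AddMonoidHom.mem_ker, hφ, Pi.single_eq_same, map_one] at h1
    haveI : Fact (1 < p) := ⟨hp.one_lt⟩
    exact one_ne_zero h1
  · intro α
    by_cases hα : α ≤ φ.ker
    · exact Or.inl hα
    right
    obtain ⟨x, hxα, hxk⟩ := SetLike.not_le_iff_exists.mp hα
    rw [AddMonoidHom.mem_ker, hφ] at hxk
    have hnd : ¬ p ∣ (x j0).val := fun hd => hxk ((zmod_cast_zero_iff hp hmj0 (x j0)).mpr hd)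
    obtain ⟨c, hc⟩ := zmod_exists_inv hp (x j0) hnd
    refine AddSubgroup.zmultiples_le.mpr ?_
    have key : (p ^ (m j0 - 1) * c.val) • x = z0 := by
      funext i
      rcases eq_or_ne i j0 with hi | hi
      · subst hi
        rw [Pi.smul_apply, nsmul_eq_mul, hz0def, Pi.single_eq_same]
        push_cast
        rw [ZMod.natCast_val, ZMod.cast_id, mul_assoc, hc, mul_one]
      · rw [Pi.smul_apply, nsmul_eq_mul, hz0def, Pi.single_eq_of_ne hi]
        have hdvd : (p ^ m i : ℕ) ∣ p ^ (m j0 - 1) * c.val :=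
          dvd_mul_of_dvd_left (pow_dvd_pow p (by have := hlt i hi; omega)) _
        rw [(ZMod.natCast_eq_zero_iff _ _).mpr hdvd, zero_mul]
    rw [← key]
    exact nsmul_mem hxα _

/-- Negative direction, `r ≥ 2` and `m 0 ≤ m 1`. -/
lemma no_splits_eq (p : ℕ) (hp : p.Prime) (r : ℕ) (hr : 1 ≤ r) (m : Fin r → ℕ)
    (hanti : ∀ i j : Fin r, i ≤ j → m j ≤ m i) (h2 : 2 ≤ r)
    (heq : m ⟨0, hr⟩ ≤ m ⟨1, h2⟩) :
    ¬ SplitsStrongly (AddSubgroup (∀ i : Fin r, ZMod (p ^ m i))) := by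
  rintro ⟨δ, ε, hε, hεδ, hδ, hall⟩
  haveI : ∀ i : Fin r, NeZero (p ^ m i) := fun i => ⟨pow_ne_zero _ hp.pos.ne'⟩
  set j0 : Fin r := ⟨0, hr⟩ with hj0def
  set j1 : Fin r := ⟨1, h2⟩ with hj1def
  have hj01 : j0 ≠ j1 := by simp [hj0def, hj1def, Fin.ext_iff]
  have hm0 : ∀ i, m i ≤ m j0 := fun i => hanti j0 i (Fin.mk_le_of_le_val (Nat.zero_le _))
  -- generic disjointness of two cyclic subgroups
  have disj : ∀ (u v : ∀ i : Fin r, ZMod (p ^ m i)) (j : Fin r), u j = 1 → v j = 0 →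
      (∀ i, u i ≠ 0 → m i ≤ m j) →
      AddSubgroup.zmultiples u ⊓ AddSubgroup.zmultiples v = ⊥ := by
    intro u v j hu hv hm
    rw [eq_bot_iff]
    intro w hw
    rw [AddSubgroup.mem_inf, AddSubgroup.mem_zmultiples_iff,
      AddSubgroup.mem_zmultiples_iff] at hw
    obtain ⟨⟨t, ht⟩, ⟨s, hs⟩⟩ := hw
    have h1 : ((t : ℤ) : ZMod (p ^ m j)) = 0 := by
      have e1 := congrFun ht j
      have e2 := congrFun hs j
      rw [Pi.smul_apply, hu, zsmul_eq_mul, mul_one] at e1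
      rw [Pi.smul_apply, hv, smul_zero] at e2
      rw [e1, ← e2]
    rw [ZMod.intCast_zmod_eq_zero_iff_dvd] at h1
    rw [AddSubgroup.mem_bot]
    funext i
    rw [← ht, Pi.smul_apply, zsmul_eq_mul, Pi.zero_apply]
    rcases eq_or_ne (u i) 0 with h0 | h0
    · rw [h0, mul_zero]
    · have hd : ((p ^ m i : ℕ) : ℤ) ∣ t :=
        dvd_trans (Int.natCast_dvd_natCast.mpr (pow_dvd_pow p (hm i h0))) h1
      rw [(ZMod.intCast_zmod_eq_zero_iff_dvd t _).mpr hd, zero_mul]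
  have hbot : ∀ X Y : AddSubgroup (∀ i : Fin r, ZMod (p ^ m i)),
      X ⊓ Y = ⊥ → ε ≤ X → ε ≤ Y → False := by
    intro X Y hXY hX hY
    exact hε.not_ge (hXY ▸ le_inf hX hY)
  set E1 : (∀ i : Fin r, ZMod (p ^ m i)) := Pi.single j0 1 with hE1def
  set E2 : (∀ i : Fin r, ZMod (p ^ m i)) := Pi.single j1 1 with hE2def
  have hE1j0 : E1 j0 = 1 := Pi.single_eq_same _ _
  have hE1j1 : E1 j1 = 0 := Pi.single_eq_of_ne hj01.symm _
  have hE2j0 : E2 j0 = 0 := Pi.single_eq_of_ne hj01 _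
  have hE2j1 : E2 j1 = 1 := Pi.single_eq_same _ _
  have hcond0 : ∀ (u : ∀ i : Fin r, ZMod (p ^ m i)), ∀ i, u i ≠ 0 → m i ≤ m j0 :=
    fun _ i _ => hm0 i
  have d12 : AddSubgroup.zmultiples E1 ⊓ AddSubgroup.zmultiples E2 = ⊥ :=
    disj E1 E2 j0 hE1j0 hE2j0 (hcond0 E1)
  have d32 : AddSubgroup.zmultiples (E1 + E2) ⊓ AddSubgroup.zmultiples E2 = ⊥ :=
    disj (E1 + E2) E2 j0 (by rw [Pi.add_apply, hE1j0, hE2j0, add_zero]) hE2j0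
      (hcond0 (E1 + E2))
  have d31 : AddSubgroup.zmultiples (E1 + E2) ⊓ AddSubgroup.zmultiples E1 = ⊥ := by
    refine disj (E1 + E2) E1 j1 (by rw [Pi.add_apply, hE1j1, hE2j1, zero_add]) hE1j1 ?_
    intro i hi
    rcases eq_or_ne i j0 with h | h
    · subst h; exact heq
    rcases eq_or_ne i j1 with h' | h'
    · subst h'; exact le_refl _
    exfalso
    apply hi
    rw [Pi.add_apply, hE1def, hE2def, Pi.single_eq_of_ne h, Pi.single_eq_of_ne h', add_zero]
  -- at least two of the three cyclic subgroups lie below δ, hence E1, E2 ∈ δ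
  have hE : E1 ∈ δ ∧ E2 ∈ δ := by
    rcases hall (AddSubgroup.zmultiples E1) with h1 | h1
    · rcases hall (AddSubgroup.zmultiples E2) with h2' | h2'
      · exact ⟨h1 (AddSubgroup.mem_zmultiples E1), h2' (AddSubgroup.mem_zmultiples E2)⟩
      · rcases hall (AddSubgroup.zmultiples (E1 + E2)) with h3 | h3
        · refine ⟨h1 (AddSubgroup.mem_zmultiples E1), ?_⟩
          have hE12 : E1 + E2 ∈ δ := h3 (AddSubgroup.mem_zmultiples _)
          simpa using δ.sub_mem hE12 (h1 (AddSubgroup.mem_zmultiples E1))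
        · exact (hbot _ _ d32 h3 h2').elim
    · rcases hall (AddSubgroup.zmultiples E2) with h2' | h2'
      · rcases hall (AddSubgroup.zmultiples (E1 + E2)) with h3 | h3
        · refine ⟨?_, h2' (AddSubgroup.mem_zmultiples E2)⟩
          have hE12 : E1 + E2 ∈ δ := h3 (AddSubgroup.mem_zmultiples _)
          simpa using δ.sub_mem hE12 (h2' (AddSubgroup.mem_zmultiples E2))
        · exact (hbot _ _ d31 h3 h1).elim
      · exact (hbot _ _ d12 h1 h2').elim
  -- every single-coordinate element at j0 or j1 lies in δ
  have hsingle : ∀ (j : Fin r), Pi.single j (1 : ZMod (p ^ m j)) ∈ δ →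
      ∀ c : ZMod (p ^ m j), Pi.single j c ∈ δ := by
    intro j hj c
    have heq' : Pi.single j c = ((c.val : ℤ) • Pi.single j (1 : ZMod (p ^ m j)) : ∀ i : Fin r, ZMod (p ^ m i)) := by
      funext i
      rcases eq_or_ne i j with hi | hi
      · subst hi
        rw [Pi.smul_apply, Pi.single_eq_same, Pi.single_eq_same, zsmul_eq_mul, mul_one]
        push_cast
        rw [ZMod.natCast_val, ZMod.cast_id]
      · rw [Pi.smul_apply, Pi.single_eq_of_ne hi, Pi.single_eq_of_ne hi, smul_zero]
    rw [heq']
    exact zsmul_mem hj _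
  obtain ⟨x, -, hx⟩ := SetLike.exists_of_lt hδ
  have hmemdiff : ∀ y : (∀ i : Fin r, ZMod (p ^ m i)), y - x ∈ δ → y ∉ δ :=
    fun y hy hyδ => hx (by simpa using δ.sub_mem hyδ hy)
  set a := x - Pi.single j0 (x j0) + Pi.single j0 (1 : ZMod (p ^ m j0))
      - Pi.single j1 (x j1) with hadef
  set b := x - Pi.single j0 (x j0) - Pi.single j1 (x j1)
      + Pi.single j1 (1 : ZMod (p ^ m j1)) with hbdef
  have haδ : a ∉ δ := by
    apply hmemdiff
    have h' : a - x = Pi.single j0 (1 : ZMod (p ^ m j0)) - Pi.single j0 (x j0)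
        - Pi.single j1 (x j1) := by
      rw [hadef]; abel
    rw [h']
    exact δ.sub_mem (δ.sub_mem hE.1 (hsingle j0 hE.1 _)) (hsingle j1 hE.2 _)
  have hbδ : b ∉ δ := by
    apply hmemdiff
    have h' : b - x = Pi.single j1 (1 : ZMod (p ^ m j1)) - Pi.single j0 (x j0)
        - Pi.single j1 (x j1) := by
      rw [hbdef]; abel
    rw [h']
    exact δ.sub_mem (δ.sub_mem hE.2 (hsingle j0 hE.1 _)) (hsingle j1 hE.2 _)
  have haj0 : a j0 = 1 := by
    rw [hadef, Pi.sub_apply, Pi.add_apply, Pi.sub_apply, Pi.single_eq_same,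
      Pi.single_eq_same, Pi.single_eq_of_ne hj01, sub_self, zero_add, sub_zero]
  have hbj0 : b j0 = 0 := by
    rw [hbdef, Pi.add_apply, Pi.sub_apply, Pi.sub_apply, Pi.single_eq_same,
      Pi.single_eq_of_ne hj01, Pi.single_eq_of_ne hj01, sub_self, sub_zero, add_zero]
  have hεa : ε ≤ AddSubgroup.zmultiples a := by
    rcases hall (AddSubgroup.zmultiples a) with h | h
    · exact absurd (h (AddSubgroup.mem_zmultiples a)) haδ
    · exact h
  have hεb : ε ≤ AddSubgroup.zmultiples b := by
    rcases hall (AddSubgroup.zmultiples b) with h | h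
    · exact absurd (h (AddSubgroup.mem_zmultiples b)) hbδ
    · exact h
  exact hbot _ _ (disj a b j0 haj0 hbj0 (hcond0 a)) hεa hεb

/-- Negative direction, `r = 1` and `m 0 = 1`. -/
lemma no_splits_one (p : ℕ) (hp : p.Prime) (m : Fin 1 → ℕ) (j : Fin 1) (hm : m j = 1) :
    ¬ SplitsStrongly (AddSubgroup (∀ i : Fin 1, ZMod (p ^ m i))) := by
  rintro ⟨δ, ε, hε, hεδ, hδ, hall⟩
  haveI : ∀ i : Fin 1, NeZero (p ^ m i) := fun i => ⟨pow_ne_zero _ hp.pos.ne'⟩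
  obtain ⟨x, -, hx⟩ := SetLike.exists_of_lt hδ
  have hz : ∃ z ∈ ε, z ≠ 0 := by
    by_contra h
    push_neg at h
    exact hε.not_ge fun z hz => (AddSubgroup.mem_bot).mpr (h z hz)
  obtain ⟨z, hzε, hz0⟩ := hz
  have hzj : z j ≠ 0 := by
    intro h0
    apply hz0
    funext i
    rw [Subsingleton.elim i j, h0, Pi.zero_apply]
  have hnd : ¬ p ∣ (z j).val := by
    intro hdvd
    have hlt' : (z j).val < p ^ m j := ZMod.val_lt _
    have hpm : p ^ m j = p := by rw [hm, pow_one]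
    have hne : (z j).val ≠ 0 := fun h0 => hzj ((ZMod.val_eq_zero _).mp h0)
    have := Nat.le_of_dvd (Nat.pos_of_ne_zero hne) hdvd
    omega
  obtain ⟨c, hc⟩ := zmod_exists_inv hp (z j) hnd
  apply hx
  have hzδ : z ∈ δ := hεδ hzε
  have hxz : x = ((x j * c).val : ℤ) • z := by
    funext i
    rw [Subsingleton.elim i j, Pi.smul_apply, zsmul_eq_mul]
    push_cast
    rw [ZMod.natCast_val, ZMod.cast_id, mul_assoc, hc, mul_one]
  rw [hxz]
  exact zsmul_mem hzδ _

end Aux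

/-- For `G = ∏_{i=1}^r ℤ/p^{m_i}` with `m₁ ≥ m₂ ≥ ⋯ ≥ m_r ≥ 1`, the subgroup
lattice of `G` splits strongly iff `(r = 1 and m₁ ≥ 2)` or `(r ≥ 2 and m₁ > m₂)`. -/
theorem abelian_subgroup_lattice_splitsStrongly_iff (p : ℕ) (hp : p.Prime)
    (r : ℕ) (hr : 1 ≤ r) (m : Fin r → ℕ)
    (hm1 : ∀ i, 1 ≤ m i) (hanti : ∀ i j : Fin r, i ≤ j → m j ≤ m i) :
    SplitsStrongly (AddSubgroup (∀ i : Fin r, ZMod (p ^ m i))) ↔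
      ((r = 1 ∧ 2 ≤ m ⟨0, hr⟩) ∨ (∃ h : 2 ≤ r, m ⟨1, h⟩ < m ⟨0, hr⟩)) := by
  constructor
  · intro hs
    by_contra hcon
    rcases Nat.lt_or_ge r 2 with hr2 | hr2
    · have hr1 : r = 1 := by omega
      subst hr1
      have hm0 : m ⟨0, hr⟩ = 1 := by
        rcases Nat.lt_or_ge (m ⟨0, hr⟩) 2 with h | h
        · have := hm1 ⟨0, hr⟩; omega
        · exact absurd (Or.inl ⟨rfl, h⟩) hcon
      exact no_splits_one p hp m ⟨0, hr⟩ hm0 hs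
    · have hle : m ⟨0, hr⟩ ≤ m ⟨1, hr2⟩ := by
        rcases Nat.lt_or_ge (m ⟨1, hr2⟩) (m ⟨0, hr⟩) with h | h
        · exact absurd (Or.inr ⟨hr2, h⟩) hcon
        · exact h
      exact no_splits_eq p hp r hr m hanti hr2 hle hs
  · rintro (⟨hr1, hm2⟩ | ⟨h2, hlt⟩)
    · subst hr1
      refine splits_positive p hp 1 hr m hm2 ?_
      intro i hi
      exact absurd (Subsingleton.elim i ⟨0, hr⟩) hi
    · refine splits_positive p hp r hr m (by have := hm1 ⟨1, h2⟩; omega) ?_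
      intro i hi
      have hv : i.1 ≠ 0 := fun h => hi (Fin.ext h)
      have h1 : m i ≤ m ⟨1, h2⟩ := hanti ⟨1, h2⟩ i (Fin.mk_le_of_le_val (by omega))
      omega
end

section
/- Let B be a set, let δ and ε be equivalence relations on B, let a, b ∈ B with (a, b) ∈ ε, and let n ≥ 1. Define f_n : Bⁿ → B by f_n(x₁, …, xₙ) = a if there exists i with (x_i, a) ∈ δ, and f_n(x₁, …, xₙ) = b otherwise. Then for every equivalence relation α on B such that α ≤ δ or ε ≤ α, the function f_n preserves α: for all x, y ∈ Bⁿ with (x_i, y_i) ∈ α for all i ∈ {1, …, n}, one has (f_n(x), f_n(y)) ∈ α. -/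
open scoped Classical

/-- Let `δ, ε` be equivalence relations on `B`, `(a, b) ∈ ε`, and for `n ≥ 1` let
`f : Bⁿ → B` map `x` to `a` if some `xᵢ` is `δ`-related to `a`, and to `b` otherwise.
Then `f` preserves every equivalence relation `α` with `α ≤ δ` or `ε ≤ α`. -/
theorem fn_preserves_congruences {B : Type*} (δ ε : Setoid B) (a b : B)
    (hab : ε a b) (n : ℕ) (hn : 1 ≤ n) (f : (Fin n → B) → B)
    (hf : ∀ x : Fin n → B, f x = if ∃ i : Fin n, δ (x i) a then a else b)
    (α : Setoid B) (hα : α ≤ δ ∨ ε ≤ α) :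
    ∀ x y : Fin n → B, (∀ i : Fin n, α (x i) (y i)) → α (f x) (f y) := by
  intro x y hxy
  rw [hf x, hf y]
  rcases hα with h | h
  · have hiff : (∃ i : Fin n, δ (x i) a) ↔ (∃ i : Fin n, δ (y i) a) := by
      constructor
      · rintro ⟨i, hi⟩
        exact ⟨i, δ.trans (δ.symm (h (hxy i))) hi⟩
      · rintro ⟨i, hi⟩
        exact ⟨i, δ.trans (h (hxy i)) hi⟩
    simp only [hiff]
    exact α.refl _
  · have hab' : α a b := h hab
    split <;> split
    · exact α.refl _
    · exact hab'
    · exact α.symm hab'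
    · exact α.refl _
end

section
/- Let G be a group, let D be a normal subgroup of G, let E be a subgroup of G with E ≤ D, let a, b ∈ G, and let n ≥ 1. Define f_n : Gⁿ → G by f_n(x₁, …, xₙ) = a if there exists i with x_i ∈ aD, and f_n(x₁, …, xₙ) = b otherwise. Then for all tuples x, y, z, w ∈ Gⁿ such that for every j ∈ {1, …, n} one has x_j·y_j⁻¹ ∈ E and w_j = x_j·y_j⁻¹·z_j, it follows that f_n(x)·f_n(y)⁻¹ ∈ E and f_n(w) = f_n(x)·f_n(y)⁻¹·f_n(z). -/
open scoped Classical

lemma coset_iff_aux {G : Type*} [Group G] (D : Subgroup G) [D.Normal] (a u v : G)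
    (h : u * v⁻¹ ∈ D) : a⁻¹ * u ∈ D ↔ a⁻¹ * v ∈ D := by
  have h1 : a⁻¹ * (u * v⁻¹) * a ∈ D := by simpa using Subgroup.Normal.conj_mem ‹D.Normal› _ h a⁻¹
  constructor
  · intro h2
    have := D.mul_mem (D.inv_mem h1) h2
    simpa [mul_assoc] using this
  · intro h2
    have := D.mul_mem h1 h2
    simpa [mul_assoc] using this

/-- Let `D` be a normal subgroup of `G`, `E ≤ D` a subgroup, `a, b ∈ G`, `n ≥ 1`,
and let `f : Gⁿ → G` map `x` to `a` if some `xᵢ` lies in the coset `aD`, and to `b`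
otherwise. Then `f` preserves the centrality relation
`ρ = {(x₁,x₂,x₃,x₄) : x₁x₂⁻¹ ∈ E ∧ x₁x₂⁻¹x₃ = x₄}`. -/
theorem fn_preserves_centrality {G : Type*} [Group G] (D : Subgroup G) [D.Normal]
    (E : Subgroup G) (hED : E ≤ D) (a b : G) (n : ℕ) (hn : 1 ≤ n)
    (f : (Fin n → G) → G)
    (hf : ∀ x : Fin n → G, f x = if ∃ i : Fin n, a⁻¹ * x i ∈ D then a else b)
    (x y z w : Fin n → G)
    (hxy : ∀ j : Fin n, x j * (y j)⁻¹ ∈ E)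
    (hw : ∀ j : Fin n, w j = x j * (y j)⁻¹ * z j) :
    f x * (f y)⁻¹ ∈ E ∧ f w = f x * (f y)⁻¹ * f z := by
  have hxyiff : (∃ i : Fin n, a⁻¹ * x i ∈ D) ↔ (∃ i : Fin n, a⁻¹ * y i ∈ D) := by
    constructor <;> rintro ⟨i, hi⟩ <;> exact ⟨i, by
      first
      | exact (coset_iff_aux D a (x i) (y i) (hED (hxy i))).mp hi
      | exact (coset_iff_aux D a (x i) (y i) (hED (hxy i))).mpr hi⟩
  have hfxy : f x = f y := by rw [hf, hf, if_congr hxyiff rfl rfl]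
  have hwziff : (∃ i : Fin n, a⁻¹ * w i ∈ D) ↔ (∃ i : Fin n, a⁻¹ * z i ∈ D) := by
    constructor <;> rintro ⟨i, hi⟩ <;> refine ⟨i, ?_⟩
    · have h : w i * (z i)⁻¹ ∈ D := by
        rw [hw i]; simpa [mul_assoc] using hED (hxy i)
      exact (coset_iff_aux D a (w i) (z i) h).mp hi
    · have h : w i * (z i)⁻¹ ∈ D := by
        rw [hw i]; simpa [mul_assoc] using hED (hxy i)
      exact (coset_iff_aux D a (w i) (z i) h).mpr hi
  have hfwz : f w = f z := by rw [hf, hf, if_congr hwziff rfl rfl]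
  constructor
  · rw [hfxy]; simp [E.one_mem]
  · rw [hfxy, hfwz]; simp
end

section
/- Let H and K be finite groups whose orders are coprime. Then the map sending a pair (N₁, N₂), where N₁ is a normal subgroup of H and N₂ is a normal subgroup of K, to the normal subgroup N₁ × N₂ of H × K, is an order isomorphism from the product of the lattices of normal subgroups of H and of K onto the lattice of normal subgroups of H × K. -/
private lemma eq_prod_of_coprime {H K : Type*} [Group H] [Group K]
    [Fintype H] [Fintype K] (hcop : (Nat.card H).Coprime (Nat.card K))
    (N : Subgroup (H × K)) :
    N = (N.map (MonoidHom.fst H K)).prod (N.map (MonoidHom.snd H K)) := by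
  apply le_antisymm
  · intro x hx
    exact ⟨⟨x, hx, rfl⟩, ⟨x, hx, rfl⟩⟩
  · rintro ⟨h, k⟩ ⟨⟨⟨h', k'⟩, hx, rfl⟩, ⟨⟨h'', k''⟩, hy, rfl⟩⟩
    -- x = (h, k'), y = (h'', k) ∈ N; show (h, k) ∈ N
    have key : ∀ (a : H) (b : K), (a, b) ∈ N → (a, (1 : K)) ∈ N := by
      intro a b hab
      have h1 : ((a, b) : H × K) ^ Nat.card K = (a ^ Nat.card K, 1) := by
        simp [Prod.pow_mk, pow_card_eq_one']
      have hcop' : (Nat.card K).Coprime (orderOf a) :=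
        Nat.Coprime.coprime_dvd_right (orderOf_dvd_natCard a) hcop.symm
      obtain ⟨m, hm⟩ := exists_pow_eq_self_of_coprime hcop'
      have : ((a, b) : H × K) ^ (Nat.card K * m) = (a, 1) := by
        simp [Prod.pow_mk, pow_mul, ← Nat.card_eq_fintype_card, hm, pow_card_eq_one']
      exact this ▸ N.pow_mem hab _
    have key2 : ∀ (a : H) (b : K), (a, b) ∈ N → ((1 : H), b) ∈ N := by
      intro a b hab
      have h1 : ((a, b) : H × K) ^ Nat.card H = (1, b ^ Nat.card H) := by
        simp [Prod.pow_mk, pow_card_eq_one']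
      have hcop' : (Nat.card H).Coprime (orderOf b) :=
        Nat.Coprime.coprime_dvd_right (orderOf_dvd_natCard b) hcop
      obtain ⟨m, hm⟩ := exists_pow_eq_self_of_coprime hcop'
      have : ((a, b) : H × K) ^ (Nat.card H * m) = (1, b) := by
        simp [Prod.pow_mk, pow_mul, ← Nat.card_eq_fintype_card, hm, pow_card_eq_one']
      exact this ▸ N.pow_mem hab _
    have h1 : ((h', 1) : H × K) ∈ N := key _ _ hx
    have h2 : ((1 : H), k'') ∈ N := key2 _ _ hy
    simpa using N.mul_mem h1 h2

/-- If `H` and `K` are finite groups of coprime order, then `(N₁, N₂) ↦ N₁ × N₂`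
is an order isomorphism from the product of the lattices of normal subgroups of
`H` and of `K` onto the lattice of normal subgroups of `H × K`. -/
theorem normal_subgroup_lattice_prod_iso {H K : Type*} [Group H] [Group K]
    [Fintype H] [Fintype K] (hcop : (Nat.card H).Coprime (Nat.card K)) :
    ∃ e : ({N : Subgroup H // N.Normal} × {N : Subgroup K // N.Normal}) ≃o
        {N : Subgroup (H × K) // N.Normal},
      ∀ (N₁ : {N : Subgroup H // N.Normal}) (N₂ : {N : Subgroup K // N.Normal}),
        (e (N₁, N₂) : Subgroup (H × K)) = (N₁ : Subgroup H).prod (N₂ : Subgroup K) := by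
  have hfst : Function.Surjective (MonoidHom.fst H K) := fun a => ⟨(a, 1), rfl⟩
  have hsnd : Function.Surjective (MonoidHom.snd H K) := fun a => ⟨(1, a), rfl⟩
  let eq : ({N : Subgroup H // N.Normal} × {N : Subgroup K // N.Normal}) ≃
      {N : Subgroup (H × K) // N.Normal} :=
    { toFun := fun p => ⟨(p.1 : Subgroup H).prod (p.2 : Subgroup K), @Subgroup.prod_normal _ _ _ _ _ _ p.1.2 p.2.2⟩
      invFun := fun N => (⟨N.1.map (MonoidHom.fst H K), N.2.map _ hfst⟩,
        ⟨N.1.map (MonoidHom.snd H K), N.2.map _ hsnd⟩)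
      left_inv := by
        rintro ⟨⟨N₁, h₁⟩, ⟨N₂, h₂⟩⟩
        simp only [Prod.mk.injEq, Subtype.mk.injEq]
        constructor
        · ext a
          simp only [Subgroup.mem_map, Subgroup.mem_prod, MonoidHom.coe_fst]
          exact ⟨by rintro ⟨⟨x, y⟩, ⟨hx, _⟩, rfl⟩; exact hx,
            fun ha => ⟨(a, 1), ⟨ha, N₂.one_mem⟩, rfl⟩⟩
        · ext a
          simp only [Subgroup.mem_map, Subgroup.mem_prod, MonoidHom.coe_snd]
          exact ⟨by rintro ⟨⟨x, y⟩, ⟨_, hy⟩, rfl⟩; exact hy,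
            fun ha => ⟨(1, a), ⟨N₁.one_mem, ha⟩, rfl⟩⟩
      right_inv := by
        rintro ⟨N, hN⟩
        simp only [Subtype.mk.injEq]
        exact (eq_prod_of_coprime hcop N).symm }
  refine ⟨eq.toOrderIso ?_ ?_, fun N₁ N₂ => rfl⟩
  · rintro ⟨⟨N₁, _⟩, ⟨N₂, _⟩⟩ ⟨⟨M₁, _⟩, ⟨M₂, _⟩⟩ ⟨hle1, hle2⟩
    exact Subgroup.prod_mono hle1 hle2
  · rintro ⟨N, _⟩ ⟨M, _⟩ hle
    exact ⟨Subgroup.map_mono hle, Subgroup.map_mono hle⟩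
end
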